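/- If a list L of weight–score pairs contains the pair (1, 1) (an attacker with full acceptability attacking through a relation of full weight), then for any real number v0 the iterated attack aggregation satisfies F_att(v0, L) = 0. -/

import Mathlib

/-- Single-step attack aggregation in the QuAM framework. -/
def fAtt (v0 w v : ℝ) : ℝ := v0 - v0 * w * v

/-- Iterated attack aggregation: left fold of `fAtt` over a list of weight–score pairs. -/
def FAtt (v0 : ℝ) (L : List (ℝ × ℝ)) : ℝ :=
  L.foldl (fun acc p => fAtt acc p.1 p.2) v0

/-! Each attacker `(w, v)` scales the running score by `1 - w * v`, so the fold is a product,
and a full attacker contributes the factor `0`. -/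

theorem fAtt_eq_mul (v0 w v : ℝ) : fAtt v0 w v = v0 * (1 - w * v) := by
  unfold fAtt
  ring

theorem FAtt_cons (v0 : ℝ) (p : ℝ × ℝ) (L : List (ℝ × ℝ)) :
    FAtt v0 (p :: L) = FAtt (fAtt v0 p.1 p.2) L :=
  rfl

theorem FAtt_eq_mul_prod (v0 : ℝ) (L : List (ℝ × ℝ)) :
    FAtt v0 L = v0 * (L.map fun p => 1 - p.1 * p.2).prod := by
  induction L generalizing v0 with
  | nil => simp [FAtt]
  | cons p L ih => rw [FAtt_cons, ih, fAtt_eq_mul, List.map_cons, List.prod_cons, mul_assoc]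

theorem FAtt_eq_zero_of_mem_of_mul_eq_one (v0 : ℝ) {L : List (ℝ × ℝ)} {p : ℝ × ℝ}
    (hp : p ∈ L) (hfull : p.1 * p.2 = 1) : FAtt v0 L = 0 := by
  have hzero : (0 : ℝ) ∈ L.map fun p => 1 - p.1 * p.2 :=
    List.mem_map.mpr ⟨p, hp, by rw [hfull, sub_self]⟩
  rw [FAtt_eq_mul_prod, List.prod_eq_zero hzero, mul_zero]

theorem FAtt_of_full_attacker (v0 : ℝ) (L : List (ℝ × ℝ))
    (h : ((1:ℝ), (1:ℝ)) ∈ L) : FAtt v0 L = 0 :=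
  FAtt_eq_zero_of_mem_of_mul_eq_one v0 h (mul_one 1)
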